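/- Let C be a minimum σ-τ edge cut in the q-T-fractal △_q, and let {x,y} be the unique edge of C lying on the outermost boundary B_q, where x lies in the connected component of σ in △_q − C. Then dist_{△_q − C}(σ, x) + dist_{△_q − C}(y, τ) = q. -/

import Mathlib

/-!
Cutting `△_q` is rigid. Every `σ`-`τ` cut meets each of the `q + 1` pairwise disjoint boundaries
`B_i` (each is a `σ`-`τ` path), while the edges leaving `{0, …, x}` (one per scale `2 ^ j`) form a
cut with at most `q + 1` edges. So a minimum cut containing the unit edge `{x, x + 1}` contains no
other unit edge; following unit edges, it then contains every edge jumping over `x`, and by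
counting it is exactly the set of those edges.

After this cut the distance from `σ = 0` to `x` is the number of ones in the binary expansion of
`x`: a walk runs through the truncations `⌊x / 2 ^ k⌋ 2 ^ k`, and the number of truncations (at
the ones of `x`) lying below the current vertex grows by at most one along every remaining edge.
The reflection `a ↦ 2 ^ q - a` is an automorphism of `△_q`, so the distance from `x + 1` to `τ`
is the number of ones of `2 ^ q - 1 - x`, whose lowest `q` binary digits complement those of `x`.
-/

/-- Auxiliary adjacency: `b = a + 2^(q-i)` for some `i ≤ q` with `2^(q-i) ∣ a`.
These are exactly the (directed versions of the) edges of the `q`-T-fractal,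
where the boundary `B_i` consists of the edges at scale `2^(q-i)`. -/
def fracAdjAux (q a b : ℕ) : Prop :=
  ∃ i ≤ q, 2 ^ (q - i) ∣ a ∧ b = a + 2 ^ (q - i)

/-- The `q`-T-fractal, realized on the vertex set `{0, 1, …, 2^q}` (the vertices of the
outermost boundary path): the left copy of `△_{q-1}` lives on `{0,…,2^{q-1}}`, the right
copy on `{2^{q-1},…,2^q}`, and `{0, 2^q}` is the extra edge; `σ = 0` and `τ = 2^q`. -/
def TFractal (q : ℕ) : SimpleGraph (Fin (2 ^ q + 1)) where
  Adj a b := fracAdjAux q a.val b.val ∨ fracAdjAux q b.val a.val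
  symm := ⟨fun _ _ h => Or.symm h⟩
  loopless := by
    refine ⟨fun a h => ?_⟩
    rcases h with ⟨i, _, _, h⟩ | ⟨i, _, _, h⟩ <;>
      · have := Nat.two_pow_pos (q - i)
        omega

/-- The special vertex `σ` of the `q`-T-fractal. -/
def sigV (q : ℕ) : Fin (2 ^ q + 1) := ⟨0, Nat.succ_pos _⟩

/-- The special vertex `τ` of the `q`-T-fractal. -/
def tauV (q : ℕ) : Fin (2 ^ q + 1) := ⟨2 ^ q, Nat.lt_succ_self _⟩

/-- The boundary `B_i` of the `q`-T-fractal: the edges created in round `i`,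
i.e. the edges `{a, a + 2^(q-i)}` with `2^(q-i) ∣ a`. -/
def boundaryB (q i : ℕ) : Set (Sym2 (Fin (2 ^ q + 1))) :=
  { e | ∃ a b : Fin (2 ^ q + 1),
      e = s(a, b) ∧ 2 ^ (q - i) ∣ a.val ∧ b.val = a.val + 2 ^ (q - i) }

/-- `C` is a `σ`-`τ` edge cut in the `q`-T-fractal. -/
def IsSTCut (q : ℕ) (C : Set (Sym2 (Fin (2 ^ q + 1)))) : Prop :=
  ¬ ((TFractal q).deleteEdges C).Reachable (sigV q) (tauV q)

/-- `C` is a minimum `σ`-`τ` edge cut in the `q`-T-fractal. -/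
def MinSTCut (q : ℕ) (C : Set (Sym2 (Fin (2 ^ q + 1)))) : Prop :=
  C ⊆ (TFractal q).edgeSet ∧ IsSTCut q C ∧
    ∀ C' ⊆ (TFractal q).edgeSet, IsSTCut q C' → C.ncard ≤ C'.ncard

open Finset Fin.NatCast

namespace SimpleGraph

variable {V W : Type*} {G : SimpleGraph V} {G' : SimpleGraph W}

def edgeBoundary (G : SimpleGraph V) (S : Set V) : Set (Sym2 V) :=
  {e | ∃ a b, G.Adj a b ∧ a ∈ S ∧ b ∉ S ∧ s(a, b) = e}

theorem mk_mem_edgeBoundary {S : Set V} {a b : V} :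
    s(a, b) ∈ G.edgeBoundary S ↔ G.Adj a b ∧ ¬(a ∈ S ↔ b ∈ S) := by
  constructor
  · rintro ⟨a', b', hadj, ha, hb, he⟩
    rcases Sym2.eq_iff.1 he with ⟨rfl, rfl⟩ | ⟨rfl, rfl⟩
    · exact ⟨hadj, by tauto⟩
    · exact ⟨hadj.symm, by tauto⟩
  · rintro ⟨hadj, hS⟩
    by_cases ha : a ∈ S
    · exact ⟨a, b, hadj, ha, by tauto, rfl⟩
    · exact ⟨b, a, hadj.symm, by tauto, ha, Sym2.eq_swap⟩

theorem edgeBoundary_subset_edgeSet (S : Set V) : G.edgeBoundary S ⊆ G.edgeSet := by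
  rintro _ ⟨a, b, hadj, -, -, rfl⟩
  exact hadj

theorem edgeBoundary_compl (S : Set V) : G.edgeBoundary Sᶜ = G.edgeBoundary S := by
  ext e
  induction e using Sym2.ind
  simp only [mk_mem_edgeBoundary, Set.mem_compl_iff, not_iff_not]

theorem Reachable.mem_of_deleteEdges_edgeBoundary {S : Set V} {u v : V}
    (h : (G.deleteEdges (G.edgeBoundary S)).Reachable u v) (hu : u ∈ S) : v ∈ S := by
  obtain ⟨w⟩ := h
  induction w with
  | nil => exact hu
  | cons hadj _ ih =>
    rw [deleteEdges_adj, mk_mem_edgeBoundary] at hadj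
    exact ih (by tauto)

def Iso.deleteEdgesEdgeBoundary (φ : G ≃g G') (S : Set W) :
    G.deleteEdges (G.edgeBoundary (φ ⁻¹' S)) ≃g G'.deleteEdges (G'.edgeBoundary S) where
  toEquiv := φ.toEquiv
  map_rel_iff' := by
    intro a b
    simp only [deleteEdges_adj, mk_mem_edgeBoundary, Set.mem_preimage, RelIso.coe_fn_toEquiv,
      Iso.map_adj_iff]

@[simp]
theorem Iso.deleteEdgesEdgeBoundary_apply (φ : G ≃g G') (S : Set W) (v : V) :
    φ.deleteEdgesEdgeBoundary S v = φ v :=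
  rfl

theorem Hom.edist_le (f : G →g G') (u v : V) : G'.edist (f u) (f v) ≤ G.edist u v := by
  by_cases h : G.Reachable u v
  · obtain ⟨p, hp⟩ := h.exists_walk_length_eq_edist
    rw [← hp, ← p.length_map f]
    exact SimpleGraph.edist_le _
  · rw [edist_eq_top_of_not_reachable h]
    exact le_top

theorem Iso.dist_eq (φ : G ≃g G') (u v : V) : G'.dist (φ u) (φ v) = G.dist u v := by
  have hle := φ.symm.toHom.edist_le (φ u) (φ v)
  simp only [RelHom.coeFn_mk, RelIso.coe_fn_toEquiv, RelIso.symm_apply_apply] at hle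
  exact congrArg ENat.toNat (le_antisymm (φ.toHom.edist_le u v) hle)

theorem exists_walk_of_chain [DecidableEq V] (f : ℕ → V) (n : ℕ)
    (h : ∀ i < n, f i ≠ f (i + 1) → G.Adj (f i) (f (i + 1))) :
    ∃ w : G.Walk (f 0) (f n), w.length = #{i ∈ range n | f i ≠ f (i + 1)} := by
  induction n with
  | zero => exact ⟨.nil, rfl⟩
  | succ n ih =>
    obtain ⟨w, hw⟩ := ih fun i hi => h i (by omega)
    rw [range_add_one, filter_insert]
    by_cases hne : f n = f (n + 1)
    · exact ⟨w.copy rfl hne, by simp [hw, hne]⟩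
    · refine ⟨w.concat (h n (by omega) hne), ?_⟩
      rw [if_pos hne, card_insert_of_notMem (by simp), Walk.length_concat, hw]

theorem Walk.le_add_length {Φ : V → ℕ} (hΦ : ∀ u v, G.Adj u v → Φ v ≤ Φ u + 1) {u v : V}
    (w : G.Walk u v) : Φ v ≤ Φ u + w.length := by
  induction w with
  | nil => simp
  | cons hadj _ ih =>
    have := hΦ _ _ hadj
    rw [Walk.length_cons]
    omega

theorem Reachable.le_add_dist {Φ : V → ℕ} (hΦ : ∀ u v, G.Adj u v → Φ v ≤ Φ u + 1) {u v : V}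
    (h : G.Reachable u v) : Φ v ≤ Φ u + G.dist u v := by
  obtain ⟨w, hw⟩ := h.exists_walk_length_eq_dist
  exact hw ▸ w.le_add_length hΦ

end SimpleGraph

theorem Set.ncard_le_ncard_of_forall_inter_nonempty {ι α : Type*} {s : Set ι} {B : ι → Set α}
    (hB : s.PairwiseDisjoint B) {D : Set α} (hD : D.Finite)
    (h : ∀ i ∈ s, (D ∩ B i).Nonempty) : s.ncard ≤ D.ncard := by
  rcases s.eq_empty_or_nonempty with rfl | ⟨i₀, hi₀⟩
  · simp
  have : Nonempty α := ⟨(h i₀ hi₀).some⟩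
  choose! f hf using h
  refine Set.ncard_le_ncard_of_injOn f (fun i hi => (hf i hi).1) ?_ hD
  intro i hi j hj hij
  by_contra hne
  exact Set.disjoint_left.1 (hB hi hj hne) (hf i hi).2 (hij ▸ (hf j hj).2)

namespace Nat

theorem div_two_pow_mul_two_pow_eq (m k : ℕ) :
    m / 2 ^ k * 2 ^ k = m / 2 ^ (k + 1) * 2 ^ (k + 1) + if m.testBit k then 2 ^ k else 0 := by
  have hdiv : m / 2 ^ (k + 1) = m / 2 ^ k / 2 := by rw [Nat.div_div_eq_div_mul, pow_succ]
  rw [hdiv, testBit_eq_decide_div_mod_eq, pow_succ]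
  conv_lhs => rw [← Nat.div_add_mod (m / 2 ^ k) 2]
  rcases Nat.mod_two_eq_zero_or_one (m / 2 ^ k) with h | h <;>
    simp only [h, add_zero, decide_true, decide_false, zero_ne_one, Bool.false_eq_true,
      if_true, if_false] <;> ring

theorem not_two_pow_succ_dvd_div_mul {m k : ℕ} (h : m.testBit k) :
    ¬ 2 ^ (k + 1) ∣ m / 2 ^ k * 2 ^ k := by
  rw [div_two_pow_mul_two_pow_eq, if_pos h, Nat.dvd_add_right (Nat.dvd_mul_left _ _),
    Nat.pow_dvd_pow_iff_le_right (by norm_num)]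
  omega

theorem eq_of_div_two_pow_mul_eq {m k l : ℕ} (hk : m.testBit k) (hl : m.testBit l)
    (h : m / 2 ^ k * 2 ^ k = m / 2 ^ l * 2 ^ l) : k = l := by
  by_contra hne
  rcases Nat.lt_or_gt_of_ne hne with hkl | hlk
  · exact not_two_pow_succ_dvd_div_mul hk
      (h ▸ (Nat.pow_dvd_pow 2 hkl).trans (Nat.dvd_mul_left _ _))
  · exact not_two_pow_succ_dvd_div_mul hl
      (h ▸ (Nat.pow_dvd_pow 2 hlk).trans (Nat.dvd_mul_left _ _))

/-- A truncation of `m` that lands in `(a, a + 2 ^ j]` for a multiple `a` of `2 ^ j` with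
`a + 2 ^ j ≤ m` is the right end: coarser truncations are multiples of `2 ^ j`, and finer ones
are at least the largest multiple of `2 ^ j` below `m`. -/
theorem div_two_pow_mul_eq_of_mem_Ioc {m a j k : ℕ} (ha : 2 ^ j ∣ a) (hm : a + 2 ^ j ≤ m)
    (h₁ : a < m / 2 ^ k * 2 ^ k) (h₂ : m / 2 ^ k * 2 ^ k ≤ a + 2 ^ j) :
    m / 2 ^ k * 2 ^ k = a + 2 ^ j := by
  rcases le_total k j with hkj | hjk
  · have hdvd : 2 ^ k ∣ a + 2 ^ j :=
      (Nat.pow_dvd_pow 2 hkj).trans (Nat.dvd_add ha dvd_rfl)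
    have : a + 2 ^ j ≤ m / 2 ^ k * 2 ^ k :=
      (Nat.div_mul_cancel hdvd).symm.le.trans
        (Nat.mul_le_mul_right _ (Nat.div_le_div_right hm))
    omega
  · obtain ⟨c, hc⟩ : 2 ^ j ∣ m / 2 ^ k * 2 ^ k :=
      (Nat.pow_dvd_pow 2 hjk).trans (Nat.dvd_mul_left _ _)
    obtain ⟨d, rfl⟩ := ha
    have : c = d + 1 := by
      have hpos := Nat.two_pow_pos j
      have h1 : 2 ^ j * d < 2 ^ j * c := hc ▸ h₁
      have h2 : 2 ^ j * c ≤ 2 ^ j * (d + 1) := by rw [← hc, mul_add, mul_one]; exact h₂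
      have := Nat.lt_of_mul_lt_mul_left h1
      have := Nat.le_of_mul_le_mul_left h2 hpos
      omega
    rw [hc, this, mul_add, mul_one]

theorem card_filter_testBit_add_card_filter_testBit_two_pow_sub {q m : ℕ} (hm : m < 2 ^ q) :
    #{k ∈ range q | m.testBit k} + #{k ∈ range q | (2 ^ q - (m + 1)).testBit k} = q := by
  have hcompl : {k ∈ range q | (2 ^ q - (m + 1)).testBit k} = {k ∈ range q | ¬ m.testBit k} :=
    filter_congr fun k hk => by
      simp [testBit_two_pow_sub_succ hm, mem_range.1 hk]
  rw [hcompl, card_filter_add_card_filter_not, card_range]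

theorem div_mul_eq_of_dvd_of_le_of_lt {m a d : ℕ} (hd : d ∣ a) (h₁ : a ≤ m) (h₂ : m < a + d) :
    m / d * d = a := by
  obtain ⟨c, rfl⟩ := hd
  rw [Nat.div_eq_of_lt_le (k := c) (by linarith) (by linarith), mul_comm]

end Nat

def prefixCount (q m n : ℕ) : ℕ := #{k ∈ range q | m.testBit k ∧ m / 2 ^ k * 2 ^ k ≤ n}

theorem prefixCount_zero (q m : ℕ) : prefixCount q m 0 = 0 := by
  refine card_eq_zero.2 (filter_eq_empty_iff.2 fun k _ ⟨hk, hle⟩ => ?_)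
  exact Nat.not_two_pow_succ_dvd_div_mul hk (Nat.le_zero.1 hle ▸ dvd_zero _)

theorem prefixCount_of_le {q m n : ℕ} (h : m ≤ n) :
    prefixCount q m n = #{k ∈ range q | m.testBit k} :=
  congrArg card <| filter_congr fun k _ =>
    and_iff_left ((Nat.div_mul_le_self m (2 ^ k)).trans h)

theorem prefixCount_mono (q m : ℕ) : Monotone (prefixCount q m) :=
  fun _ _ h => card_le_card fun _ hk => by
    simp only [mem_filter] at hk ⊢
    exact ⟨hk.1, hk.2.1, hk.2.2.trans h⟩

theorem prefixCount_add_two_pow_le {q m a j : ℕ} (ha : 2 ^ j ∣ a) (hm : a + 2 ^ j ≤ m) :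
    prefixCount q m (a + 2 ^ j) ≤ prefixCount q m a + 1 := by
  have hsplit : {k ∈ range q | m.testBit k ∧ m / 2 ^ k * 2 ^ k ≤ a + 2 ^ j} ⊆
      {k ∈ range q | m.testBit k ∧ m / 2 ^ k * 2 ^ k ≤ a} ∪
        {k ∈ range q | m.testBit k ∧ a < m / 2 ^ k * 2 ^ k ∧ m / 2 ^ k * 2 ^ k ≤ a + 2 ^ j} := by
    intro k hk
    simp only [mem_filter, mem_union] at hk ⊢
    rcases le_or_gt (m / 2 ^ k * 2 ^ k) a with h | h <;> tauto
  have hnew : #{k ∈ range q | m.testBit k ∧ a < m / 2 ^ k * 2 ^ k ∧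
      m / 2 ^ k * 2 ^ k ≤ a + 2 ^ j} ≤ 1 := by
    refine card_le_one.2 fun k hk l hl => ?_
    simp only [mem_filter] at hk hl
    exact Nat.eq_of_div_two_pow_mul_eq hk.2.1 hl.2.1
      ((Nat.div_two_pow_mul_eq_of_mem_Ioc ha hm hk.2.2.1 hk.2.2.2).trans
        (Nat.div_two_pow_mul_eq_of_mem_Ioc ha hm hl.2.2.1 hl.2.2.2).symm)
  exact (card_le_card hsplit).trans ((card_union_le _ _).trans (by unfold prefixCount; omega))

theorem fracAdjAux_iff {q a b : ℕ} : fracAdjAux q a b ↔ ∃ j ≤ q, 2 ^ j ∣ a ∧ b = a + 2 ^ j := by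
  constructor
  · rintro ⟨i, -, h⟩
    exact ⟨q - i, Nat.sub_le _ _, h⟩
  · rintro ⟨j, hj, h⟩
    exact ⟨q - j, Nat.sub_le _ _, by rwa [Nat.sub_sub_self hj]⟩

theorem tfractal_adj_of_dvd {q j : ℕ} {a b : Fin (2 ^ q + 1)} (hj : j ≤ q) (ha : 2 ^ j ∣ a.val)
    (hb : b.val = a.val + 2 ^ j) : (TFractal q).Adj a b :=
  Or.inl (fracAdjAux_iff.2 ⟨j, hj, ha, hb⟩)

theorem tfractal_adj_natCast {q j n : ℕ} (hj : j ≤ q) (hn : 2 ^ j ∣ n) (h : n + 2 ^ j ≤ 2 ^ q) :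
    (TFractal q).Adj (n : Fin (2 ^ q + 1)) ((n + 2 ^ j : ℕ) : Fin (2 ^ q + 1)) :=
  tfractal_adj_of_dvd hj (by rwa [Fin.val_cast_of_lt (by omega)])
    (by rw [Fin.val_cast_of_lt (by omega), Fin.val_cast_of_lt (by omega)])

theorem tfractal_adj_rev {q : ℕ} {a b : Fin (2 ^ q + 1)} (h : (TFractal q).Adj a b) :
    (TFractal q).Adj a.rev b.rev := by
  have key : ∀ {a b : Fin (2 ^ q + 1)}, fracAdjAux q a b → fracAdjAux q b.rev a.rev := by
    intro a b h
    obtain ⟨j, hj, ha, hb⟩ := fracAdjAux_iff.1 h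
    have hb' : b.rev.val = 2 ^ q - (a.val + 2 ^ j) := by simp only [Fin.val_rev]; omega
    have ha' : a.rev.val = b.rev.val + 2 ^ j := by simp only [Fin.val_rev]; omega
    exact fracAdjAux_iff.2 ⟨j, hj, hb' ▸ Nat.dvd_sub (Nat.pow_dvd_pow 2 hj) (Nat.dvd_add ha dvd_rfl),
      ha'⟩
  exact h.elim (fun h => Or.inr (key h)) (fun h => Or.inl (key h))

def tfractalRev (q : ℕ) : TFractal q ≃g TFractal q where
  toEquiv := Fin.revPerm
  map_rel_iff' := ⟨fun h => by simpa using tfractal_adj_rev h, tfractal_adj_rev⟩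

theorem mk_natCast_mem_boundaryB {q i n : ℕ} (hn : 2 ^ (q - i) ∣ n) (h : n + 2 ^ (q - i) ≤ 2 ^ q) :
    s((n : Fin (2 ^ q + 1)), ((n + 2 ^ (q - i) : ℕ) : Fin (2 ^ q + 1))) ∈ boundaryB q i :=
  ⟨_, _, rfl, by rwa [Fin.val_cast_of_lt (by omega)],
    by rw [Fin.val_cast_of_lt (by omega), Fin.val_cast_of_lt (by omega)]⟩

theorem boundaryB_pairwiseDisjoint (q : ℕ) : (Set.Iic q).PairwiseDisjoint (boundaryB q) := by
  intro i hi j hj hne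
  refine Set.disjoint_left.2 ?_
  rintro _ ⟨a, b, rfl, -, hb⟩ ⟨a', b', he, -, hb'⟩
  have hpos := Nat.two_pow_pos (q - i)
  have hpos' := Nat.two_pow_pos (q - j)
  have hlen : 2 ^ (q - i) = 2 ^ (q - j) := by
    rcases Sym2.eq_iff.1 he with ⟨rfl, rfl⟩ | ⟨rfl, rfl⟩ <;> omega
  have := Nat.pow_right_injective le_rfl hlen
  simp only [Set.mem_Iic] at hi hj
  omega

theorem IsSTCut.inter_boundaryB_nonempty {q i : ℕ} {C : Set (Sym2 (Fin (2 ^ q + 1)))}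
    (hC : IsSTCut q C) (hi : i ≤ q) : (C ∩ boundaryB q i).Nonempty := by
  by_contra hempty
  have hpow : 2 ^ i * 2 ^ (q - i) = 2 ^ q := by rw [← pow_add, Nat.add_sub_cancel' hi]
  obtain ⟨w, -⟩ := SimpleGraph.exists_walk_of_chain (G := (TFractal q).deleteEdges C)
    (fun c => ((c * 2 ^ (q - i) : ℕ) : Fin (2 ^ q + 1))) (2 ^ i) fun c hc _ => by
      have hle : c * 2 ^ (q - i) + 2 ^ (q - i) ≤ 2 ^ q := by
        rw [← hpow, ← add_one_mul]
        exact Nat.mul_le_mul_right _ hc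
      simp only [add_one_mul]
      exact SimpleGraph.deleteEdges_adj.2 ⟨tfractal_adj_natCast (Nat.sub_le _ _)
        (Dvd.intro_left _ rfl) hle,
        fun hmem => hempty ⟨_, hmem, mk_natCast_mem_boundaryB (Dvd.intro_left _ rfl) hle⟩⟩
  have hσ : ((0 * 2 ^ (q - i) : ℕ) : Fin (2 ^ q + 1)) = sigV q := Fin.ext (by simp [sigV])
  have hτ : ((2 ^ i * 2 ^ (q - i) : ℕ) : Fin (2 ^ q + 1)) = tauV q := by
    rw [hpow]
    exact Fin.ext (Fin.val_cast_of_lt (Nat.lt_succ_self _))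
  exact hC (hσ ▸ hτ ▸ ⟨w⟩)

theorem isSTCut_edgeBoundary_Iic {q : ℕ} {x : Fin (2 ^ q + 1)} (hx : x.val < 2 ^ q) :
    IsSTCut q ((TFractal q).edgeBoundary (Set.Iic x)) := fun h => by
  have := h.mem_of_deleteEdges_edgeBoundary (Fin.zero_le x)
  simp only [Set.mem_Iic, Fin.le_def, tauV] at this
  omega

theorem ncard_edgeBoundary_Iic_le {q : ℕ} (x : Fin (2 ^ q + 1)) :
    ((TFractal q).edgeBoundary (Set.Iic x)).ncard ≤ q + 1 := by
  set g : ℕ → Sym2 (Fin (2 ^ q + 1)) := fun j =>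
    s(((x.val / 2 ^ j * 2 ^ j : ℕ) : Fin (2 ^ q + 1)),
      ((x.val / 2 ^ j * 2 ^ j + 2 ^ j : ℕ) : Fin (2 ^ q + 1)))
  have hsub : (TFractal q).edgeBoundary (Set.Iic x) ⊆ ((range (q + 1)).image g : Set _) := by
    rintro _ ⟨a, b, hadj, ha, hb, rfl⟩
    simp only [Set.mem_Iic, Fin.le_def, not_le] at ha hb
    rcases hadj with h | h <;> obtain ⟨j, hj, hd, he⟩ := fracAdjAux_iff.1 h
    · have hcut := Nat.div_mul_eq_of_dvd_of_le_of_lt hd ha (by omega)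
      refine Finset.mem_coe.2 (mem_image.2 ⟨j, mem_range.2 (by omega), ?_⟩)
      simp only [g, hcut, ← he, Fin.cast_val_eq_self]
    · omega
  calc ((TFractal q).edgeBoundary (Set.Iic x)).ncard
      ≤ ((range (q + 1)).image g : Set _).ncard := Set.ncard_le_ncard hsub (Finset.finite_toSet _)
    _ ≤ q + 1 := by
      rw [Set.ncard_coe_finset]
      exact card_image_le.trans (card_range _).le

theorem MinSTCut.ncard_le {q : ℕ} {C : Set (Sym2 (Fin (2 ^ q + 1)))} (hC : MinSTCut q C) :
    C.ncard ≤ q + 1 :=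
  (hC.2.2 _ (SimpleGraph.edgeBoundary_subset_edgeSet _)
    (isSTCut_edgeBoundary_Iic (x := sigV q) (Nat.two_pow_pos q))).trans
    (ncard_edgeBoundary_Iic_le _)

theorem MinSTCut.eq_of_mem_boundaryB {q i : ℕ} {C : Set (Sym2 (Fin (2 ^ q + 1)))}
    (hC : MinSTCut q C) (hi : i ≤ q) {e e' : Sym2 (Fin (2 ^ q + 1))}
    (he : e ∈ C ∩ boundaryB q i) (he' : e' ∈ C ∩ boundaryB q i) : e = e' := by
  by_contra hne
  have hmeet : ∀ j ∈ Set.Iic q, ((C \ {e'}) ∩ boundaryB q j).Nonempty := by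
    intro j hj
    by_cases hji : j = i
    · exact ⟨e, ⟨he.1, hne⟩, hji ▸ he.2⟩
    · obtain ⟨f, hfC, hfB⟩ := hC.2.1.inter_boundaryB_nonempty hj
      refine ⟨f, ⟨hfC, fun hf => ?_⟩, hfB⟩
      exact Set.disjoint_left.1 (boundaryB_pairwiseDisjoint q hj hi hji) hfB
        ((Set.mem_singleton_iff.1 hf) ▸ he'.2)
  have hcard := Set.ncard_le_ncard_of_forall_inter_nonempty (boundaryB_pairwiseDisjoint q)
    (Set.toFinite _) hmeet
  rw [Set.ncard_Iic_nat, Set.ncard_sdiff_singleton_of_mem he'.1] at hcard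
  have := hC.ncard_le
  omega

theorem tfractal_reachable_of_unit_edges_notMem {q c d : ℕ} {C : Set (Sym2 (Fin (2 ^ q + 1)))}
    (hcd : c ≤ d) (hd : d ≤ 2 ^ q)
    (h : ∀ t, c ≤ t → t < d → s((t : Fin (2 ^ q + 1)), ((t + 1 : ℕ) : Fin (2 ^ q + 1))) ∉ C) :
    ((TFractal q).deleteEdges C).Reachable (c : Fin (2 ^ q + 1)) (d : Fin (2 ^ q + 1)) := by
  obtain ⟨w, -⟩ := SimpleGraph.exists_walk_of_chain (G := (TFractal q).deleteEdges C)
    (fun t => ((c + t : ℕ) : Fin (2 ^ q + 1))) (d - c) fun t ht _ =>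
      SimpleGraph.deleteEdges_adj.2 ⟨tfractal_adj_natCast (j := 0) (Nat.zero_le q) (one_dvd _)
        (by omega), h (c + t) (by omega) (by omega)⟩
  rw [add_zero, Nat.add_sub_cancel' hcd] at w
  exact ⟨w⟩

theorem MinSTCut.edgeBoundary_Iic_subset {q : ℕ} {C : Set (Sym2 (Fin (2 ^ q + 1)))}
    (hC : MinSTCut q C) {a b : Fin (2 ^ q + 1)} (hab : s(a, b) ∈ C) (hb : b.val = a.val + 1) :
    (TFractal q).edgeBoundary (Set.Iic a) ⊆ C := by
  have hunit : ∀ t, t ≠ a.val → t < 2 ^ q →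
      s((t : Fin (2 ^ q + 1)), ((t + 1 : ℕ) : Fin (2 ^ q + 1))) ∉ C := by
    intro t hta ht hmem
    have hB : s((t : Fin (2 ^ q + 1)), ((t + 1 : ℕ) : Fin (2 ^ q + 1))) ∈ boundaryB q q := by
      simpa using mk_natCast_mem_boundaryB (q := q) (i := q) (n := t) (by simp) (by simpa using ht)
    have := hC.eq_of_mem_boundaryB le_rfl ⟨hmem, hB⟩ ⟨hab, ⟨a, b, rfl, by simp, by simpa using hb⟩⟩
    have ht₁ : (t : Fin (2 ^ q + 1)).val = t := Fin.val_cast_of_lt (by omega)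
    have ht₂ : ((t + 1 : ℕ) : Fin (2 ^ q + 1)).val = t + 1 := Fin.val_cast_of_lt (by omega)
    rcases Sym2.eq_iff.1 this with ⟨h, -⟩ | ⟨h, h'⟩
    · rw [Fin.ext_iff] at h
      omega
    · rw [Fin.ext_iff] at h h'
      omega
  rintro _ ⟨u, v, huv, hu, hv, rfl⟩
  by_contra hnot
  simp only [Set.mem_Iic, Fin.le_def, not_le] at hu hv
  have hσu := tfractal_reachable_of_unit_edges_notMem (C := C) (Nat.zero_le u.val) (by omega)
    fun t _ ht => hunit t (by omega) (by omega)
  have hvτ := tfractal_reachable_of_unit_edges_notMem (C := C) (c := v.val) (d := 2 ^ q) (by omega)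
    le_rfl fun t ht _ => hunit t (by omega) (by omega)
  have hσ : ((0 : ℕ) : Fin (2 ^ q + 1)) = sigV q := Fin.ext (by simp [sigV])
  have hτ : ((2 ^ q : ℕ) : Fin (2 ^ q + 1)) = tauV q := Fin.ext (Fin.val_cast_of_lt (by omega))
  rw [Fin.cast_val_eq_self, hσ] at hσu
  rw [Fin.cast_val_eq_self, hτ] at hvτ
  exact hC.2.1 (hσu.trans ((SimpleGraph.deleteEdges_adj.2 ⟨huv, hnot⟩).reachable.trans hvτ))

theorem MinSTCut.eq_edgeBoundary_Iic {q : ℕ} {C : Set (Sym2 (Fin (2 ^ q + 1)))}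
    (hC : MinSTCut q C) {a b : Fin (2 ^ q + 1)} (hab : s(a, b) ∈ C) (hb : b.val = a.val + 1) :
    C = (TFractal q).edgeBoundary (Set.Iic a) :=
  (Set.eq_of_subset_of_ncard_le (hC.edgeBoundary_Iic_subset hab hb)
    (hC.2.2 _ (SimpleGraph.edgeBoundary_subset_edgeSet _)
      (isSTCut_edgeBoundary_Iic (by have := b.isLt; omega))) (Set.toFinite _)).symm

theorem prefixCount_le_succ_of_adj {q : ℕ} {x u v : Fin (2 ^ q + 1)}
    (h : ((TFractal q).deleteEdges ((TFractal q).edgeBoundary (Set.Iic x))).Adj u v) :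
    prefixCount q x.val v.val ≤ prefixCount q x.val u.val + 1 := by
  rw [SimpleGraph.deleteEdges_adj, SimpleGraph.mk_mem_edgeBoundary] at h
  obtain ⟨hadj, hcut⟩ := h
  have hside : u.val ≤ x.val ↔ v.val ≤ x.val := not_not.1 fun h' => hcut ⟨hadj, h'⟩
  rcases hadj with h | h <;> obtain ⟨j, -, hd, he⟩ := fracAdjAux_iff.1 h
  · by_cases hv : v.val ≤ x.val
    · rw [he]
      exact prefixCount_add_two_pow_le hd (he ▸ hv)
    · rw [prefixCount_of_le (by omega), prefixCount_of_le (by omega)]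
      omega
  · exact (prefixCount_mono q x.val (by omega : v.val ≤ u.val)).trans (Nat.le_succ _)

theorem dist_sigV_edgeBoundary_Iic {q : ℕ} {x : Fin (2 ^ q + 1)} (hx : x.val < 2 ^ q) :
    ((TFractal q).deleteEdges ((TFractal q).edgeBoundary (Set.Iic x))).dist (sigV q) x =
      #{k ∈ range q | x.val.testBit k} := by
  set H := (TFractal q).deleteEdges ((TFractal q).edgeBoundary (Set.Iic x))
  set f : ℕ → Fin (2 ^ q + 1) := fun k => ((x.val / 2 ^ k * 2 ^ k : ℕ) : Fin (2 ^ q + 1))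
  have hle : ∀ k, x.val / 2 ^ k * 2 ^ k ≤ x.val := fun k => Nat.div_mul_le_self _ _
  have hval : ∀ k, (f k).val = x.val / 2 ^ k * 2 ^ k :=
    fun k => Fin.val_cast_of_lt (by have := hle k; omega)
  have hstep : ∀ k, f k ≠ f (k + 1) ↔ x.val.testBit k := by
    intro k
    rw [Ne, Fin.ext_iff, hval, hval, Nat.div_two_pow_mul_two_pow_eq x.val k]
    split_ifs with h <;> simp [h]
  obtain ⟨w, hw⟩ := SimpleGraph.exists_walk_of_chain (G := H) f q fun k hk hne => by
    have hsum := Nat.div_two_pow_mul_two_pow_eq x.val k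
    rw [if_pos ((hstep k).1 hne)] at hsum
    refine SimpleGraph.deleteEdges_adj.2 ⟨(tfractal_adj_of_dvd (j := k) hk.le ?_ ?_).symm, ?_⟩
    · rw [hval]
      exact (Nat.pow_dvd_pow 2 k.le_succ).trans (Nat.dvd_mul_left _ _)
    · rw [hval, hval, hsum]
    · simp [SimpleGraph.mk_mem_edgeBoundary, Fin.le_def, hval, hle]
  have h0 : f 0 = x := by simp [f]
  have hq : f q = sigV q := Fin.ext (by simp [hval, Nat.div_eq_of_lt hx, sigV])
  have hlen : (w.copy h0 hq).length = #{k ∈ range q | x.val.testBit k} := by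
    rw [SimpleGraph.Walk.length_copy, hw]
    exact congrArg card (filter_congr fun k _ => hstep k)
  apply le_antisymm
  · rw [SimpleGraph.dist_comm, ← hlen]
    exact SimpleGraph.dist_le _
  · have := (SimpleGraph.Reachable.symm ⟨w.copy h0 hq⟩).le_add_dist
      (Φ := fun v => prefixCount q x.val v.val) fun _ _ h => prefixCount_le_succ_of_adj h
    simpa [sigV, prefixCount_zero, prefixCount_of_le le_rfl] using this

theorem dist_edgeBoundary_Iic_tauV {q : ℕ} {x y : Fin (2 ^ q + 1)} (hy : y.val = x.val + 1) :
    ((TFractal q).deleteEdges ((TFractal q).edgeBoundary (Set.Iic x))).dist y (tauV q) =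
      #{k ∈ range q | (2 ^ q - (x.val + 1)).testBit k} := by
  have hS : (Set.Iic x)ᶜ = tfractalRev q ⁻¹' Set.Iic y.rev := by
    ext a
    change ¬a ≤ x ↔ a.rev ≤ y.rev
    rw [Fin.rev_le_rev, Fin.le_def, Fin.le_def]
    omega
  have hτ : (tfractalRev q) (tauV q) = sigV q := Fin.ext (by simp [tfractalRev, tauV, sigV])
  have hrev : y.rev.val = 2 ^ q - (x.val + 1) := by simp only [Fin.val_rev]; omega
  rw [← SimpleGraph.edgeBoundary_compl, hS,
    ← ((tfractalRev q).deleteEdgesEdgeBoundary _).dist_eq y (tauV q),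
    SimpleGraph.Iso.deleteEdgesEdgeBoundary_apply, SimpleGraph.Iso.deleteEdgesEdgeBoundary_apply,
    hτ, SimpleGraph.dist_comm, ← hrev]
  exact dist_sigV_edgeBoundary_Iic (by omega)

/-- if `C` is a minimum `σ`-`τ` edge cut of `△_q` and `{x,y}` is the edge
of `C` on the outermost boundary `B_q`, with `x` in the connected component of `σ` in
`△_q − C`, then `dist(σ,x) + dist(y,τ) = q` in `△_q − C`. -/
theorem tfractal_cut_distance_sum (q : ℕ) (C : Set (Sym2 (Fin (2 ^ q + 1))))
    (x y : Fin (2 ^ q + 1)) (hC : MinSTCut q C)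
    (hxy : s(x, y) ∈ C) (hBq : s(x, y) ∈ boundaryB q q)
    (hx : ((TFractal q).deleteEdges C).Reachable (sigV q) x) :
    ((TFractal q).deleteEdges C).dist (sigV q) x +
      ((TFractal q).deleteEdges C).dist y (tauV q) = q := by
  obtain ⟨a, b, hab, -, hb⟩ := hBq
  rw [Nat.sub_self, pow_zero] at hb
  obtain rfl := hC.eq_edgeBoundary_Iic (hab ▸ hxy) hb
  have hxa : x.val ≤ a.val := hx.mem_of_deleteEdges_edgeBoundary (Fin.zero_le a)
  obtain ⟨rfl, rfl⟩ : x = a ∧ y = b := by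
    rcases Sym2.eq_iff.1 hab with h | ⟨rfl, -⟩
    · exact h
    · omega
  rw [dist_sigV_edgeBoundary_Iic (by omega), dist_edgeBoundary_Iic_tauV hb]
  exact Nat.card_filter_testBit_add_card_filter_testBit_two_pow_sub (by omega)
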